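/- arXiv:2205.09313 — 4 statements merged into one kernel-verified Lean document; each statement's English description precedes it below -/
import Mathlib

section
/- Under the detailed balance condition Φ⁺_j(x^s) = Φ⁻_j(x^s) with x^s componentwise positive, the function ψ(x) = Σ_i (x_i log(x_i/x^s_i) − x_i + x^s_i) (the KL divergence of x from x^s) satisfies H(∇ψ(x), x) = 0 for all componentwise positive x, where H is the chemical Hamiltonian with mass-action fluxes. -/
open Finset

private lemma key_aux {N : ℕ} (ν1 ν2 : Fin N → ℕ) (x xs : Fin N → ℝ)
    (hx : ∀ i, 0 < x i) (hxs : ∀ i, 0 < xs i) :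
    (∏ i, x i ^ ν1 i) *
      Real.exp (∑ i, ((ν2 i : ℝ) - (ν1 i : ℝ)) * Real.log (x i / xs i))
    = (∏ i, xs i ^ ν1 i) * ∏ i, (x i / xs i) ^ ν2 i := by
  rw [Real.exp_sum, ← Finset.prod_mul_distrib, ← Finset.prod_mul_distrib]
  apply Finset.prod_congr rfl
  intro i _
  have hr : 0 < x i / xs i := div_pos (hx i) (hxs i)
  have h1 : Real.exp (((ν2 i : ℝ) - (ν1 i : ℝ)) * Real.log (x i / xs i))
      = (x i / xs i) ^ ((ν2 i : ℝ) - (ν1 i : ℝ)) := by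
    rw [Real.rpow_def_of_pos hr, mul_comm]
  rw [h1, Real.rpow_sub hr, Real.rpow_natCast, Real.rpow_natCast]
  have hx' := (hx i).ne'
  have hxs' := (hxs i).ne'
  field_simp
  ring_nf
  rw [mul_assoc, ← mul_pow, mul_inv_cancel₀ hxs', one_pow, mul_one]

/-- Under detailed balance at `xˢ > 0`, the KL-divergence potential
`ψ(x) = Σ_i (x_i log(x_i/xˢ_i) - x_i + xˢ_i)`, whose gradient is
`∇ψ(x) = log(x/xˢ)` componentwise, satisfies `H(∇ψ(x), x) = 0` for all `x > 0`,
where `H` is the chemical Hamiltonian with mass-action fluxes. -/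
theorem stmt_8 {N M : ℕ} (kp km : Fin M → ℝ)
    (hkp : ∀ j, 0 < kp j) (hkm : ∀ j, 0 < km j)
    (νp νm : Fin M → Fin N → ℕ)
    (xs : Fin N → ℝ) (hxs : ∀ i, 0 < xs i)
    (hdb : ∀ j, kp j * ∏ i, xs i ^ νp j i = km j * ∏ i, xs i ^ νm j i)
    (x : Fin N → ℝ) (hx : ∀ i, 0 < x i) :
    ∑ j, ((kp j * ∏ i, x i ^ νp j i) *
        (Real.exp (∑ i, ((νm j i : ℝ) - (νp j i : ℝ)) * Real.log (x i / xs i)) - 1)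
      + (km j * ∏ i, x i ^ νm j i) *
        (Real.exp (-∑ i, ((νm j i : ℝ) - (νp j i : ℝ)) * Real.log (x i / xs i)) - 1))
      = 0 := by
  apply Finset.sum_eq_zero
  intro j _
  have hmul : ∀ i, xs i * (x i / xs i) = x i := fun i =>
    mul_div_cancel₀ (x i) (hxs i).ne'
  have h1 : (kp j * ∏ i, x i ^ νp j i) *
      Real.exp (∑ i, ((νm j i : ℝ) - (νp j i : ℝ)) * Real.log (x i / xs i))
      = km j * ∏ i, x i ^ νm j i := by
    rw [mul_assoc, key_aux (νp j) (νm j) x xs hx hxs, ← mul_assoc, hdb j,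
      mul_assoc, ← Finset.prod_mul_distrib]
    congr 1
    apply Finset.prod_congr rfl
    intro i _
    rw [← mul_pow, hmul]
  have h2 : (km j * ∏ i, x i ^ νm j i) *
      Real.exp (-∑ i, ((νm j i : ℝ) - (νp j i : ℝ)) * Real.log (x i / xs i))
      = kp j * ∏ i, x i ^ νp j i := by
    have : (-∑ i, ((νm j i : ℝ) - (νp j i : ℝ)) * Real.log (x i / xs i))
        = ∑ i, ((νp j i : ℝ) - (νm j i : ℝ)) * Real.log (x i / xs i) := by
      rw [← Finset.sum_neg_distrib]
      apply Finset.sum_congr rfl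
      intro i _
      ring
    rw [this, mul_assoc, key_aux (νm j) (νp j) x xs hx hxs, ← mul_assoc, ← hdb j,
      mul_assoc, ← Finset.prod_mul_distrib]
    congr 1
    apply Finset.prod_congr rfl
    intro i _
    rw [← mul_pow, hmul]
  have e1 := h1
  have e2 := h2
  nlinarith [e1, e2]
end

section
/- Nonexpansiveness of the backward-Euler resolvent: under the same hypotheses, ‖u − v‖_∞ ≤ ‖f − g‖_∞, where ‖·‖_∞ is the sup norm over the finite state space. -/
open Finset

lemma stmt_11_aux {S ι : Type*} [Fintype S] [Nonempty S]
    (h Δt : ℝ) (hh : 0 < h) (hΔt : 0 < Δt)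
    (J : S → Finset ι) (c : ι → S → ℝ) (T : ι → S → S)
    (hc : ∀ i, ∀ j ∈ J i, 0 ≤ c j i)
    (u v f g : S → ℝ)
    (hu : ∀ i, u i - Δt * ∑ j ∈ J i, c j i * (Real.exp ((u (T j i) - u i) / h) - 1) = f i)
    (hv : ∀ i, v i - Δt * ∑ j ∈ J i, c j i * (Real.exp ((v (T j i) - v i) / h) - 1) = g i) :
    ∀ i, u i - v i ≤ Finset.univ.sup' Finset.univ_nonempty (fun k => |f k - g k|) := by
  obtain ⟨i0, -, hmax⟩ := Finset.exists_max_image Finset.univ (fun k => u k - v k)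
    Finset.univ_nonempty
  intro i
  have hsum : ∑ j ∈ J i0, c j i0 * (Real.exp ((u (T j i0) - u i0) / h) - 1) ≤
      ∑ j ∈ J i0, c j i0 * (Real.exp ((v (T j i0) - v i0) / h) - 1) := by
    refine Finset.sum_le_sum fun j hj => ?_
    refine mul_le_mul_of_nonneg_left ?_ (hc i0 j hj)
    have h1 : u (T j i0) - v (T j i0) ≤ u i0 - v i0 := hmax _ (Finset.mem_univ _)
    have h2 : (u (T j i0) - u i0) / h ≤ (v (T j i0) - v i0) / h := by
      exact div_le_div_of_nonneg_right (by linarith) hh.le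
    simpa using Real.exp_le_exp.2 h2
  have hmul : Δt * ∑ j ∈ J i0, c j i0 * (Real.exp ((u (T j i0) - u i0) / h) - 1) ≤
      Δt * ∑ j ∈ J i0, c j i0 * (Real.exp ((v (T j i0) - v i0) / h) - 1) :=
    mul_le_mul_of_nonneg_left hsum hΔt.le
  have key : u i0 - v i0 ≤ |f i0 - g i0| := by
    have h1 := hu i0
    have h2 := hv i0
    have := le_abs_self (f i0 - g i0)
    linarith
  have hle : |f i0 - g i0| ≤ Finset.univ.sup' Finset.univ_nonempty (fun k => |f k - g k|) :=
    Finset.le_sup' (fun k => |f k - g k|) (Finset.mem_univ i0)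
  have := hmax i (Finset.mem_univ i)
  linarith

/-- Nonexpansiveness of the backward-Euler resolvent:
`‖u - v‖_∞ ≤ ‖f - g‖_∞` in the sup norm over the finite state space. -/
theorem stmt_11 {S ι : Type*} [Fintype S] [Nonempty S]
    (h Δt : ℝ) (hh : 0 < h) (hΔt : 0 < Δt)
    (J : S → Finset ι) (c : ι → S → ℝ) (T : ι → S → S)
    (hc : ∀ i, ∀ j ∈ J i, 0 ≤ c j i)
    (u v f g : S → ℝ)
    (hu : ∀ i, u i - Δt * ∑ j ∈ J i, c j i * (Real.exp ((u (T j i) - u i) / h) - 1) = f i)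
    (hv : ∀ i, v i - Δt * ∑ j ∈ J i, c j i * (Real.exp ((v (T j i) - v i) / h) - 1) = g i) :
    ∀ i, |u i - v i| ≤ Finset.univ.sup' Finset.univ_nonempty (fun k => |f k - g k|) := by
  intro i
  have h1 := stmt_11_aux h Δt hh hΔt J c T hc u v f g hu hv i
  have h2 := stmt_11_aux h Δt hh hΔt J c T hc v u g f hv hu i
  have heq : (Finset.univ.sup' Finset.univ_nonempty fun k => |g k - f k|) =
      Finset.univ.sup' Finset.univ_nonempty fun k => |f k - g k| := by
    congr 1; funext k; rw [abs_sub_comm]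
  rw [heq] at h2
  rw [abs_le]
  constructor <;> linarith
end

section
/- At a maximum point of the difference of two resolvent solutions, the difference is bounded by the difference of the data: if i* maximizes u − v over the finite state space, then (u − v)(i*) ≤ (f − g)(i*). -/
/-!
At a maximum point `i*` of `u - v`, every jump increment `φ (T j i*) - φ i*` is at most as large
for `φ = u` as for `φ = v`. The Hamiltonian is monotone in these increments (the rates are
nonnegative and `exp` is increasing), so `H_h(u)(i*) ≤ H_h(v)(i*)`, and subtracting the two
resolvent equations gives the claim.
-/

open Finset

/-- `H_h(i, φ(i), φ)` in the notation of the paper. -/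
noncomputable def jumpHamiltonian {S ι : Type*} (h : ℝ) (J : S → Finset ι) (c : ι → S → ℝ)
    (T : ι → S → S) (φ : S → ℝ) (i : S) : ℝ :=
  ∑ j ∈ J i, c j i * (Real.exp ((φ (T j i) - φ i) / h) - 1)

section

variable {S ι : Type*} {h : ℝ} {J : S → Finset ι} {c : ι → S → ℝ} {T : ι → S → S}

theorem jumpHamiltonian_le_of_increment_le {u v : S → ℝ} {i : S} (hh : 0 ≤ h)
    (hc : ∀ j ∈ J i, 0 ≤ c j i)
    (hinc : ∀ j ∈ J i, u (T j i) - u i ≤ v (T j i) - v i) :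
    jumpHamiltonian h J c T u i ≤ jumpHamiltonian h J c T v i := by
  refine sum_le_sum fun j hj => mul_le_mul_of_nonneg_left ?_ (hc j hj)
  exact sub_le_sub_right (Real.exp_le_exp.mpr (div_le_div_of_nonneg_right (hinc j hj) hh)) 1

theorem jumpHamiltonian_le_at_argmax_sub {u v : S → ℝ} {i : S} (hh : 0 ≤ h)
    (hc : ∀ j ∈ J i, 0 ≤ c j i) (hmax : ∀ k, u k - v k ≤ u i - v i) :
    jumpHamiltonian h J c T u i ≤ jumpHamiltonian h J c T v i :=
  jumpHamiltonian_le_of_increment_le hh hc fun j _ => by linarith [hmax (T j i)]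

end

theorem stmt_12_general {S ι : Type*}
    (h Δt : ℝ) (hh : 0 < h) (hΔt : 0 < Δt)
    (J : S → Finset ι) (c : ι → S → ℝ) (T : ι → S → S)
    (hc : ∀ i, ∀ j ∈ J i, 0 ≤ c j i)
    (u v f g : S → ℝ)
    (hu : ∀ i, u i - Δt * ∑ j ∈ J i, c j i * (Real.exp ((u (T j i) - u i) / h) - 1) = f i)
    (hv : ∀ i, v i - Δt * ∑ j ∈ J i, c j i * (Real.exp ((v (T j i) - v i) / h) - 1) = g i)
    (istar : S) (hmax : ∀ i, u i - v i ≤ u istar - v istar) :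
    u istar - v istar ≤ f istar - g istar := by
  have hH : jumpHamiltonian h J c T u istar ≤ jumpHamiltonian h J c T v istar :=
    jumpHamiltonian_le_at_argmax_sub hh.le (hc istar) hmax
  have hΔtH := mul_le_mul_of_nonneg_left hH hΔt.le
  rw [← hu istar, ← hv istar]
  unfold jumpHamiltonian at hΔtH
  linarith

/-- At a maximum point `i*` of `u - v`, the difference of two resolvent solutions
is bounded by the difference of the data: `(u - v)(i*) ≤ (f - g)(i*)`. -/
theorem stmt_12 {S ι : Type*} [Fintype S]
    (h Δt : ℝ) (hh : 0 < h) (hΔt : 0 < Δt)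
    (J : S → Finset ι) (c : ι → S → ℝ) (T : ι → S → S)
    (hc : ∀ i, ∀ j ∈ J i, 0 ≤ c j i)
    (u v f g : S → ℝ)
    (hu : ∀ i, u i - Δt * ∑ j ∈ J i, c j i * (Real.exp ((u (T j i) - u i) / h) - 1) = f i)
    (hv : ∀ i, v i - Δt * ∑ j ∈ J i, c j i * (Real.exp ((v (T j i) - v i) / h) - 1) = g i)
    (istar : S) (hmax : ∀ i, u i - v i ≤ u istar - v istar) :
    u istar - v istar ≤ f istar - g istar :=
  stmt_12_general h Δt hh hΔt J c T hc u v f g hu hv istar hmax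
end

section
/- Conversely (Crandall–Tartar), a map on bounded functions that commutes with addition of constants and is sup-norm nonexpansive is monotone: if T(u + c) = T(u) + c and ‖Tu − Tv‖_∞ ≤ ‖u − v‖_∞ for all u, v, then u ≤ v implies Tu ≤ Tv. -/
/-! If `u ≤ v ≤ u + C`, then `u + C` is within `C` of `v`, so nonexpansiveness gives
`T (u + C) ≤ T v + C`; commuting with constants turns the left side into `T u + C`. -/

section

variable {S : Type*} {T : (S → ℝ) → (S → ℝ)}

theorem apply_le_apply_of_le_of_le_add
    (hconst : ∀ (u : S → ℝ) (c : ℝ), T (fun i => u i + c) = fun i => T u i + c)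
    (hnonexp : ∀ (u v : S → ℝ) (C : ℝ),
      (∀ i, |u i - v i| ≤ C) → ∀ i, |T u i - T v i| ≤ C)
    {u v : S → ℝ} {C : ℝ} (hle : ∀ i, u i ≤ v i) (hle_add : ∀ i, v i ≤ u i + C) (i : S) :
    T u i ≤ T v i := by
  have hclose : ∀ j, |(u j + C) - v j| ≤ C := fun j =>
    abs_le.2 ⟨by linarith [hle j, hle_add j], by linarith [hle j]⟩
  have hT := (abs_le.1 (hnonexp _ v C hclose i)).2
  rw [hconst u C] at hT
  linarith

end

/-- Crandall–Tartar converse: a map on bounded functions commuting with addition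
of constants that is sup-norm nonexpansive is monotone. -/
theorem stmt_16 {S : Type*} (T : (S → ℝ) → (S → ℝ))
    (hconst : ∀ (u : S → ℝ) (c : ℝ), T (fun i => u i + c) = fun i => T u i + c)
    (hnonexp : ∀ (u v : S → ℝ) (C : ℝ),
      (∀ i, |u i - v i| ≤ C) → ∀ i, |T u i - T v i| ≤ C)
    (u v : S → ℝ) (hbdd : ∃ C, ∀ i, |u i - v i| ≤ C)
    (hle : ∀ i, u i ≤ v i) :
    ∀ i, T u i ≤ T v i := by
  obtain ⟨C, hC⟩ := hbdd
  exact apply_le_apply_of_le_of_le_add hconst hnonexp hle fun i => by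
    linarith [(abs_le.1 (hC i)).1]
end
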